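/- arXiv:2106.12415 — 2 statements merged into one kernel-verified Lean document; each statement's English description precedes it below -/
import Mathlib

section
/- For every constant C > 0 and every integer n ≥ 1, there exists r > 1 such that for every continuously differentiable function f : ℝ → ℝ whose support is compact and contained in the open interval (r, ∞), one has ∫_r^∞ f'(ρ)² e^{-ρ²/4} ρ^{n-1} dρ ≥ C ∫_r^∞ f(ρ)² e^{-ρ²/4} ρ^{n-1} dρ. -/
open MeasureTheory Real


private lemma aux_ineq (A B E P q r ρ : ℝ) (hr2 : 2 ≤ r) (hρr : r < ρ)
    (hE0 : 0 < E) (hP0 : 0 < P) (hq : q ≤ 1 / 2 * P) :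
    2 * B * A * (E * P) + B ^ 2 * (E * -(ρ / 2) * P + E * q) + r / 8 * (B ^ 2 * (E * P))
      ≤ 8 / r * (A ^ 2 * (E * P)) := by
  have hr0 : (0:ℝ) < r := by linarith
  have hEP : (0:ℝ) < E * P := mul_pos hE0 hP0
  have h2 : B ^ 2 * (E * q) ≤ B ^ 2 * (E * (1 / 2 * P)) :=
    mul_le_mul_of_nonneg_left (mul_le_mul_of_nonneg_left hq hE0.le) (sq_nonneg B)
  rw [show (8:ℝ) / r * (A ^ 2 * (E * P)) = 8 * A ^ 2 * (E * P) / r from by ring,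
    le_div_iff₀ hr0]
  nlinarith [mul_nonneg (sq_nonneg (8 * A - r * B)) hEP.le,
    mul_nonneg (mul_nonneg (sq_nonneg B) hEP.le) (mul_nonneg hr0.le (sub_nonneg.mpr hρr.le)),
    mul_nonneg (mul_nonneg (sq_nonneg B) hEP.le)
      (mul_nonneg hr0.le (by linarith : (0:ℝ) ≤ r - 2)),
    mul_le_mul_of_nonneg_right h2 hr0.le]

/-- For every constant `C > 0` and every integer `n ≥ 1`, there exists `r > 1` such that
for every `C¹` function `f : ℝ → ℝ` with compact support contained in `(r, ∞)`,
`∫_r^∞ f'(ρ)² e^{-ρ²/4} ρ^{n-1} dρ ≥ C ∫_r^∞ f(ρ)² e^{-ρ²/4} ρ^{n-1} dρ`. -/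
theorem stmt0 (C : ℝ) (hC : 0 < C) (n : ℕ) (hn : 1 ≤ n) :
    ∃ r : ℝ, 1 < r ∧
      ∀ f : ℝ → ℝ, ContDiff ℝ 1 f → HasCompactSupport f →
        tsupport f ⊆ Set.Ioi r →
        ∫ ρ in Set.Ioi r, (deriv f ρ) ^ 2 * Real.exp (-ρ ^ 2 / 4) * ρ ^ (n - 1) ≥
          C * ∫ ρ in Set.Ioi r, (f ρ) ^ 2 * Real.exp (-ρ ^ 2 / 4) * ρ ^ (n - 1) := by
  set r : ℝ := 2 * (n : ℝ) + 8 * (C + 1) + 2 with hrdef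
  have hn0 : (0:ℝ) ≤ (n:ℝ) := Nat.cast_nonneg n
  have hr2 : 2 ≤ r := by simp only [hrdef]; nlinarith
  have hr1 : (1:ℝ) < r := by linarith
  have hr0 : (0:ℝ) < r := by linarith
  have hrn : (n:ℝ) ≤ r / 2 := by simp only [hrdef]; nlinarith
  have hrC : 64 * C ≤ r ^ 2 := by
    have h8 : 8 * (C + 1) ≤ r := by simp only [hrdef]; nlinarith
    nlinarith
  refine ⟨r, hr1, fun f hf hsupp hsub => ?_⟩
  set m := n - 1 with hm
  set w : ℝ → ℝ := fun ρ => Real.exp (-ρ ^ 2 / 4) * ρ ^ m with hw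
  set g : ℝ → ℝ := fun ρ => f ρ ^ 2 * w ρ with hg
  have hw_cd : ContDiff ℝ 1 w :=
    ((Real.contDiff_exp.comp ((contDiff_id.pow 2).neg.div_const 4))).mul (contDiff_id.pow m)
  have hg_cd : ContDiff ℝ 1 g := (hf.pow 2).mul hw_cd
  have hsupp_g : HasCompactSupport g := by
    apply hsupp.mono
    intro x hx
    simp only [Function.mem_support, hg] at hx ⊢
    intro hfx
    apply hx
    rw [hfx]; ring
  have hcont_f' : Continuous (deriv f) := hf.continuous_deriv le_rfl
  have hcont_w : Continuous w := hw_cd.continuous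
  -- integrability facts
  have hint_g : Integrable g := hg_cd.continuous.integrable_of_hasCompactSupport hsupp_g
  have hint_dg : Integrable (deriv g) :=
    (hg_cd.continuous_deriv le_rfl).integrable_of_hasCompactSupport hsupp_g.deriv
  have hsupp_d : HasCompactSupport (fun ρ => (deriv f ρ) ^ 2 * w ρ) := by
    apply hsupp.deriv.mono
    intro x hx
    simp only [Function.mem_support] at hx ⊢
    intro hfx
    apply hx
    rw [hfx]; ring
  have hint_d : Integrable (fun ρ => (deriv f ρ) ^ 2 * w ρ) :=
    ((hcont_f'.pow 2).mul hcont_w).integrable_of_hasCompactSupport hsupp_d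
  -- derivative formula for g at points ρ > r
  have hderiv_g : ∀ ρ : ℝ, ρ ∈ Set.Ioi r → deriv g ρ =
      2 * f ρ * deriv f ρ * w ρ +
        f ρ ^ 2 * (Real.exp (-ρ ^ 2 / 4) * (-(ρ / 2)) * ρ ^ m +
          Real.exp (-ρ ^ 2 / 4) * ((m : ℝ) * ρ ^ (m - 1))) := by
    intro ρ _
    have h1 : HasDerivAt (fun ρ : ℝ => -ρ ^ 2 / 4) (-(ρ / 2)) ρ := by
      have := ((hasDerivAt_pow 2 ρ).neg.div_const 4)
      exact this.congr_deriv (by push_cast; ring)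
    have hE : HasDerivAt (fun ρ : ℝ => Real.exp (-ρ ^ 2 / 4))
        (Real.exp (-ρ ^ 2 / 4) * (-(ρ / 2))) ρ := h1.exp
    have hP : HasDerivAt (fun ρ : ℝ => ρ ^ m) ((m : ℝ) * ρ ^ (m - 1)) ρ := hasDerivAt_pow m ρ
    have hW : HasDerivAt w
        (Real.exp (-ρ ^ 2 / 4) * (-(ρ / 2)) * ρ ^ m +
          Real.exp (-ρ ^ 2 / 4) * ((m : ℝ) * ρ ^ (m - 1))) ρ := hE.mul hP
    have hF : HasDerivAt f (deriv f ρ) ρ := (hf.differentiable one_ne_zero ρ).hasDerivAt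
    have hB : HasDerivAt (fun ρ => f ρ ^ 2) (2 * f ρ * deriv f ρ) ρ := by
      have := hF.pow 2
      exact this.congr_deriv (by push_cast; ring)
    have hG := hB.mul hW
    exact hG.deriv
  -- pointwise inequality on Ioi r
  have hpt : ∀ ρ ∈ Set.Ioi r,
      deriv g ρ + r / 8 * g ρ ≤ 8 / r * ((deriv f ρ) ^ 2 * w ρ) := by
    intro ρ hρ
    have hρr : r < ρ := hρ
    have hρ0 : (0:ℝ) < ρ := lt_trans hr0 hρr
    have hE0 : (0:ℝ) < Real.exp (-ρ ^ 2 / 4) := Real.exp_pos _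
    have hP0 : (0:ℝ) < ρ ^ m := pow_pos hρ0 m
    have hW0 : (0:ℝ) < w ρ := mul_pos hE0 hP0
    -- key: m * ρ^(m-1) ≤ (1/2) * ρ^m
    have hkey : (m : ℝ) * ρ ^ (m - 1) ≤ (1 / 2) * ρ ^ m := by
      rcases Nat.eq_zero_or_pos m with hm0 | hm1
      · simp [hm0]; try positivity
      · have hmr : (m : ℝ) ≤ ρ / 2 := by
          have h1 : (m : ℝ) ≤ (n : ℝ) - 1 := by
            have : (m : ℝ) = (n : ℝ) - 1 := by
              simp only [hm]; push_cast [Nat.cast_sub hn]; ring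
            linarith [this.le]
          linarith [hrn, hρr.le]
        have hrw : ρ ^ m = ρ * ρ ^ (m - 1) := by
          conv_lhs => rw [← Nat.succ_pred_eq_of_pos hm1]
          rw [pow_succ, Nat.pred_eq_sub_one]; ring
        rw [hrw]
        have hpm : (0:ℝ) ≤ ρ ^ (m - 1) := le_of_lt (pow_pos hρ0 _)
        nlinarith
    rw [hderiv_g ρ hρ]
    simp only [hg, hw]
    exact aux_ineq (deriv f ρ) (f ρ) _ _ _ r ρ hr2 hρ (Real.exp_pos _) (pow_pos hρ0 m) hkey
  -- integrate the pointwise inequality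
  have hmeas : MeasurableSet (Set.Ioi r) := measurableSet_Ioi
  have hint_lhs : IntegrableOn (fun ρ => deriv g ρ + r / 8 * g ρ) (Set.Ioi r) :=
    (hint_dg.add (hint_g.const_mul _)).integrableOn
  have hint_rhs : IntegrableOn (fun ρ => 8 / r * ((deriv f ρ) ^ 2 * w ρ)) (Set.Ioi r) :=
    (hint_d.const_mul _).integrableOn
  have hineq := setIntegral_mono_on hint_lhs hint_rhs hmeas hpt
  have hgr : g r = 0 := by
    have : r ∉ tsupport f := fun h => lt_irrefl r (hsub h)
    have hfr : f r = 0 := image_eq_zero_of_notMem_tsupport this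
    simp [hg, hfr]
  have hIBP : ∫ ρ in Set.Ioi r, deriv g ρ = 0 := by
    rw [hsupp_g.integral_Ioi_deriv_eq hg_cd r, hgr, neg_zero]
  have hsplit : ∫ ρ in Set.Ioi r, (deriv g ρ + r / 8 * g ρ) =
      (∫ ρ in Set.Ioi r, deriv g ρ) + r / 8 * ∫ ρ in Set.Ioi r, g ρ := by
    rw [integral_add hint_dg.integrableOn (hint_g.const_mul _).integrableOn,
      MeasureTheory.integral_const_mul]
  have hrhs : ∫ ρ in Set.Ioi r, 8 / r * ((deriv f ρ) ^ 2 * w ρ) =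
      8 / r * ∫ ρ in Set.Ioi r, (deriv f ρ) ^ 2 * w ρ := MeasureTheory.integral_const_mul _ _
  rw [hsplit, hrhs, hIBP, zero_add] at hineq
  -- identify the integrals in the statement
  have hid1 : (∫ ρ in Set.Ioi r, (deriv f ρ) ^ 2 * Real.exp (-ρ ^ 2 / 4) * ρ ^ (n - 1)) =
      ∫ ρ in Set.Ioi r, (deriv f ρ) ^ 2 * w ρ := by
    apply integral_congr_ae
    filter_upwards with ρ
    simp [hw, hm, mul_assoc]
  have hid2 : (∫ ρ in Set.Ioi r, (f ρ) ^ 2 * Real.exp (-ρ ^ 2 / 4) * ρ ^ (n - 1)) =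
      ∫ ρ in Set.Ioi r, g ρ := by
    apply integral_congr_ae
    filter_upwards with ρ
    simp [hg, hw, hm, mul_assoc]
  rw [ge_iff_le, hid1, hid2]
  have hJ0 : 0 ≤ ∫ ρ in Set.Ioi r, g ρ := by
    apply setIntegral_nonneg hmeas
    intro ρ hρ
    have hρ0 : (0:ℝ) < ρ := lt_trans hr0 hρ
    have : (0:ℝ) < w ρ := mul_pos (Real.exp_pos _) (pow_pos hρ0 m)
    simp only [hg]
    positivity
  set I := ∫ ρ in Set.Ioi r, (deriv f ρ) ^ 2 * w ρ
  set J := ∫ ρ in Set.Ioi r, g ρ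
  -- from r/8 * J ≤ 8/r * I and 64 C ≤ r², conclude C * J ≤ I
  have h1 : r / 8 * J ≤ 8 / r * I := hineq
  have h2 : r ^ 2 * J ≤ 64 * I := by
    have := mul_le_mul_of_nonneg_left h1 (le_of_lt (by positivity : (0:ℝ) < 8 * r))
    calc r ^ 2 * J = 8 * r * (r / 8 * J) := by ring
    _ ≤ 8 * r * (8 / r * I) := this
    _ = 64 * I := by field_simp; ring
  nlinarith [mul_le_mul_of_nonneg_right hrC hJ0]
end

section
/- For every constant C > 0 and every integer m ≥ 1, there exists r > 0 such that for every smooth function f : ℝ^m → ℝ with compact support contained in the complement of the closed ball of radius r centered at the origin, one has ∫_{ℝ^m} |∇f(y)|² e^{-|y|²/4} dy ≥ C ∫_{ℝ^m} f(y)² e^{-|y|²/4} dy, where ∇ denotes the Euclidean gradient and the integrals are taken with respect to Lebesgue measure on ℝ^m. -/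
open MeasureTheory Real

section PoincareAux

variable {m : ℕ}

/-- The Gaussian weight `e^{-|y|^2/4}`. -/
noncomputable abbrev rhoF (m : ℕ) : EuclideanSpace ℝ (Fin m) → ℝ := fun y => Real.exp (-‖y‖^2/4)

/-- The Fréchet derivative of the Gaussian weight. -/
noncomputable def rhoD (m : ℕ) (y : EuclideanSpace ℝ (Fin m)) : EuclideanSpace ℝ (Fin m) →L[ℝ] ℝ :=
  rhoF m y • (((-1:ℝ)/4) • (2 • innerSL ℝ y))

lemma hasFDerivAt_rhoF (y : EuclideanSpace ℝ (Fin m)) :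
    HasFDerivAt (rhoF m) (rhoD m y) y := by
  have h1 := (hasStrictFDerivAt_norm_sq y).hasFDerivAt
  have h2 : HasFDerivAt (fun y : EuclideanSpace ℝ (Fin m) => -‖y‖^2/4)
      (((-1:ℝ)/4) • (2 • innerSL ℝ y)) y := by
    have := h1.const_smul ((-1:ℝ)/4)
    simp only [Pi.smul_def, smul_eq_mul] at this
    have heq : (fun y : EuclideanSpace ℝ (Fin m) => -‖y‖^2/4)
        = fun y : EuclideanSpace ℝ (Fin m) => ((-1:ℝ)/4) * ‖y‖^2 := by funext z; ring
    rw [heq]; exact this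
  exact (Real.hasDerivAt_exp _).comp_hasFDerivAt y h2

lemma rhoD_apply (y v : EuclideanSpace ℝ (Fin m)) :
    rhoD m y v = rhoF m y * (-(inner ℝ y v : ℝ)/2) := by
  simp [rhoD, ContinuousLinearMap.smul_apply]; ring

lemma continuous_rhoF : Continuous (rhoF m) :=
  Real.continuous_exp.comp (((continuous_norm.pow 2).neg).div_const 4)

lemma norm_sq_eq' (y : EuclideanSpace ℝ (Fin m)) : ‖y‖^2 = ∑ i, (y i)^2 := by
  rw [EuclideanSpace.norm_eq, Real.sq_sqrt (by positivity)]
  simp [sq_abs]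

lemma sum_single' (y : EuclideanSpace ℝ (Fin m)) :
    ∑ i, y i • EuclideanSpace.single i (1:ℝ) = y := by
  ext j
  have : (∑ i, y i • EuclideanSpace.single i (1:ℝ)) j
      = ∑ i, (y i • EuclideanSpace.single i (1:ℝ)) j :=
    by rw [WithLp.ofLp_sum, Finset.sum_apply]
  rw [this]
  simp [EuclideanSpace.single_apply]

/-- Integration by parts in the `i`-th coordinate direction against the vector field
`y ↦ y_i e^{-|y|^2/4}`. -/
lemma ibp_coord (f : EuclideanSpace ℝ (Fin m) → ℝ) (hf : ContDiff ℝ (⊤ : ℕ∞) f)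
    (hsupp : HasCompactSupport f) (i : Fin m) :
    ∫ y : EuclideanSpace ℝ (Fin m), (f y)^2 * ((1 - (y i)^2/2) * rhoF m y)
      = -∫ y : EuclideanSpace ℝ (Fin m),
          (2 * f y * fderiv ℝ f y (EuclideanSpace.single i (1:ℝ))) * (y i * rhoF m y) := by
  classical
  set v : EuclideanSpace ℝ (Fin m) := EuclideanSpace.single i (1:ℝ) with hv
  set F : EuclideanSpace ℝ (Fin m) → ℝ := fun y => f y ^ 2 with hF
  set F' : EuclideanSpace ℝ (Fin m) → (EuclideanSpace ℝ (Fin m) →L[ℝ] ℝ) :=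
    fun y => (2 * f y) • fderiv ℝ f y with hF'
  set G : EuclideanSpace ℝ (Fin m) → ℝ := fun y => y i * rhoF m y with hG
  set G' : EuclideanSpace ℝ (Fin m) → (EuclideanSpace ℝ (Fin m) →L[ℝ] ℝ) :=
    fun y => y i • rhoD m y + rhoF m y • (EuclideanSpace.proj i :
      EuclideanSpace ℝ (Fin m) →L[ℝ] ℝ) with hG'
  have hfd : Differentiable ℝ f := hf.differentiable (by simp)
  have hfc : Continuous f := hf.continuous
  have hf'c : Continuous (fderiv ℝ f) := hf.continuous_fderiv (by simp)
  have hFd : ∀ y, HasFDerivAt F (F' y) y := by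
    intro y
    have h := (hfd y).hasFDerivAt
    have h2 : HasFDerivAt (fun y => f y * f y)
        (f y • fderiv ℝ f y + f y • fderiv ℝ f y) y := h.mul h
    have : HasFDerivAt F (f y • fderiv ℝ f y + f y • fderiv ℝ f y) y := by
      simpa [hF, pow_two] using h2
    convert this using 1
    rw [hF']; module
  have hGd : ∀ y, HasFDerivAt G (G' y) y := by
    intro y
    have hproj : HasFDerivAt (fun y : EuclideanSpace ℝ (Fin m) => y i)
        (EuclideanSpace.proj i : EuclideanSpace ℝ (Fin m) →L[ℝ] ℝ) y :=
      (EuclideanSpace.proj i : EuclideanSpace ℝ (Fin m) →L[ℝ] ℝ).hasFDerivAt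
    exact hproj.mul (hasFDerivAt_rhoF y)
  have hprojv : (EuclideanSpace.proj i : EuclideanSpace ℝ (Fin m) →L[ℝ] ℝ) v = 1 := by
    simp [hv]
  have hinner : ∀ y : EuclideanSpace ℝ (Fin m), (inner ℝ y v : ℝ) = y i := by
    intro y; rw [hv, real_inner_comm]; simp [EuclideanSpace.inner_single_left]
  have hG'v : ∀ y, G' y v = (1 - (y i)^2/2) * rhoF m y := by
    intro y
    simp only [hG', ContinuousLinearMap.add_apply, ContinuousLinearMap.smul_apply, smul_eq_mul,
      rhoD_apply, hinner, hprojv]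
    ring
  have hF'v : ∀ y, F' y v = 2 * f y * fderiv ℝ f y v := by
    intro y; simp [hF', mul_assoc]
  have hcs : ∀ (g : EuclideanSpace ℝ (Fin m) → ℝ), Continuous g →
      Integrable (fun y => (f y * g y : ℝ)) := by
    intro g hg
    exact ((hfc.mul hg).integrable_of_hasCompactSupport (hsupp.mul_right))
  have h1 : Integrable (fun y => F' y v * G y) := by
    have : (fun y => F' y v * G y) = fun y => f y * (2 * fderiv ℝ f y v * (y i * rhoF m y)) := by
      funext y; rw [hF'v]; ring
    rw [this]
    exact hcs _ (((continuous_const.mul (hf'c.clm_apply continuous_const))).mul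
      (((EuclideanSpace.proj i).continuous).mul continuous_rhoF))
  have h2 : Integrable (fun y => F y * G' y v) := by
    have : (fun y => F y * G' y v) = fun y => f y * (f y * ((1 - (y i)^2/2) * rhoF m y)) := by
      funext y; rw [hG'v, hF, pow_two]; ring
    rw [this]
    exact hcs _ (hfc.mul ((continuous_const.sub
      (((EuclideanSpace.proj i).continuous.pow 2).div_const 2)).mul continuous_rhoF))
  have h3 : Integrable (fun y => F y * G y) := by
    have : (fun y => F y * G y) = fun y => f y * (f y * (y i * rhoF m y)) := by
      funext y; simp only [hF, hG]; ring
    rw [this]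
    exact hcs _ (hfc.mul (((EuclideanSpace.proj i).continuous).mul continuous_rhoF))
  have key := integral_bilinear_hasFDerivAt_right_eq_neg_left_of_integrable
    (B := ContinuousLinearMap.mul ℝ ℝ) (v := v) (μ := volume)
    (f := F) (f' := F') (g := G) (g' := G') (by simpa using h1) (by simpa using h2)
    (by simpa using h3) (fun x _ => hFd x) (fun x _ => hGd x)
  simp only [ContinuousLinearMap.mul_apply'] at key
  calc ∫ y : EuclideanSpace ℝ (Fin m), (f y)^2 * ((1 - (y i)^2/2) * rhoF m y)
      = ∫ y : EuclideanSpace ℝ (Fin m), F y * G' y v := by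
        congr 1; funext y; rw [hG'v]
    _ = -∫ y : EuclideanSpace ℝ (Fin m), F' y v * G y := key
    _ = -∫ y : EuclideanSpace ℝ (Fin m),
          (2 * f y * fderiv ℝ f y v) * (y i * rhoF m y) := by
        rw [neg_inj]; apply integral_congr_ae; filter_upwards with y
        rw [hF'v]

/-- Summed integration by parts identity:
`∫ f² (m - |y|²/2) ρ = -∫ 2 f ⟨∇f, y⟩ ρ`. -/
lemma ibp_sum (f : EuclideanSpace ℝ (Fin m) → ℝ) (hf : ContDiff ℝ (⊤ : ℕ∞) f)
    (hsupp : HasCompactSupport f) :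
    ∫ y : EuclideanSpace ℝ (Fin m), (f y)^2 * (((m:ℝ) - ‖y‖^2/2) * rhoF m y)
      = -∫ y : EuclideanSpace ℝ (Fin m), (2 * f y * fderiv ℝ f y y) * rhoF m y := by
  classical
  have hfc : Continuous f := hf.continuous
  have hf'c : Continuous (fderiv ℝ f) := hf.continuous_fderiv (by simp)
  have hcs : ∀ (g : EuclideanSpace ℝ (Fin m) → ℝ), Continuous g →
      Integrable (fun y => (f y * g y : ℝ)) := by
    intro g hg
    exact ((hfc.mul hg).integrable_of_hasCompactSupport (hsupp.mul_right))
  have hintL : ∀ i : Fin m,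
      Integrable (fun y : EuclideanSpace ℝ (Fin m) => (f y)^2 * ((1 - (y i)^2/2) * rhoF m y)) := by
    intro i
    have : (fun y : EuclideanSpace ℝ (Fin m) => (f y)^2 * ((1 - (y i)^2/2) * rhoF m y))
        = fun y => f y * (f y * ((1 - (y i)^2/2) * rhoF m y)) := by
      funext y; ring
    rw [this]
    exact hcs _ (hfc.mul ((continuous_const.sub
      (((EuclideanSpace.proj i).continuous.pow 2).div_const 2)).mul continuous_rhoF))
  have hintR : ∀ i : Fin m,
      Integrable (fun y : EuclideanSpace ℝ (Fin m) =>
        (2 * f y * fderiv ℝ f y (EuclideanSpace.single i (1:ℝ))) * (y i * rhoF m y)) := by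
    intro i
    have : (fun y : EuclideanSpace ℝ (Fin m) =>
        (2 * f y * fderiv ℝ f y (EuclideanSpace.single i (1:ℝ))) * (y i * rhoF m y))
        = fun y => f y * (2 * fderiv ℝ f y (EuclideanSpace.single i (1:ℝ)) * (y i * rhoF m y)) := by
      funext y; ring
    rw [this]
    exact hcs _ ((continuous_const.mul (hf'c.clm_apply continuous_const)).mul
      (((EuclideanSpace.proj i).continuous).mul continuous_rhoF))
  calc ∫ y : EuclideanSpace ℝ (Fin m), (f y)^2 * (((m:ℝ) - ‖y‖^2/2) * rhoF m y)
      = ∫ y : EuclideanSpace ℝ (Fin m),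
          ∑ i, (f y)^2 * ((1 - (y i)^2/2) * rhoF m y) := by
        apply integral_congr_ae; filter_upwards with y
        have h1 : ∑ i, (f y)^2 * ((1 - (y i)^2/2) * rhoF m y)
            = ∑ i : Fin m, ((f y)^2 * rhoF m y - ((f y)^2 * rhoF m y / 2) * (y i)^2) :=
          Finset.sum_congr rfl (fun i _ => by ring)
        rw [h1, Finset.sum_sub_distrib, Finset.sum_const, ← Finset.mul_sum, ← norm_sq_eq']
        simp only [Finset.card_univ, Fintype.card_fin, nsmul_eq_mul]
        ring
    _ = ∑ i, ∫ y : EuclideanSpace ℝ (Fin m), (f y)^2 * ((1 - (y i)^2/2) * rhoF m y) :=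
        integral_finset_sum _ (fun i _ => hintL i)
    _ = ∑ i, -∫ y : EuclideanSpace ℝ (Fin m),
          (2 * f y * fderiv ℝ f y (EuclideanSpace.single i (1:ℝ))) * (y i * rhoF m y) :=
        Finset.sum_congr rfl (fun i _ => ibp_coord f hf hsupp i)
    _ = -∑ i, ∫ y : EuclideanSpace ℝ (Fin m),
          (2 * f y * fderiv ℝ f y (EuclideanSpace.single i (1:ℝ))) * (y i * rhoF m y) := by
        rw [Finset.sum_neg_distrib]
    _ = -∫ y : EuclideanSpace ℝ (Fin m),
          ∑ i, (2 * f y * fderiv ℝ f y (EuclideanSpace.single i (1:ℝ))) * (y i * rhoF m y) := by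
        rw [integral_finset_sum _ (fun i _ => hintR i)]
    _ = -∫ y : EuclideanSpace ℝ (Fin m), (2 * f y * fderiv ℝ f y y) * rhoF m y := by
        rw [neg_inj]; apply integral_congr_ae; filter_upwards with y
        have hsum : ∑ i, y i * fderiv ℝ f y (EuclideanSpace.single i (1:ℝ)) = fderiv ℝ f y y := by
          have h : fderiv ℝ f y y
              = fderiv ℝ f y (∑ i, y i • EuclideanSpace.single i (1:ℝ)) := by rw [sum_single']
          rw [h, map_sum]
          simp [smul_eq_mul]
        calc ∑ i, (2 * f y * fderiv ℝ f y (EuclideanSpace.single i (1:ℝ))) * (y i * rhoF m y)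
            = ∑ i, (2 * f y * rhoF m y) * (y i * fderiv ℝ f y (EuclideanSpace.single i (1:ℝ))) :=
              Finset.sum_congr rfl (fun i _ => by ring)
          _ = (2 * f y * rhoF m y) * ∑ i, y i * fderiv ℝ f y (EuclideanSpace.single i (1:ℝ)) :=
              (Finset.mul_sum _ _ _).symm
          _ = (2 * f y * fderiv ℝ f y y) * rhoF m y := by rw [hsum]; ring

end PoincareAux

/-- Weighted Poincaré inequality on exterior regions of Euclidean space: for every `C > 0`
and every integer `m ≥ 1` there is `r > 0` such that for every smooth `f : ℝ^m → ℝ` with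
compact support contained in the complement of the closed ball of radius `r`,
`∫ |∇f|² e^{-|y|²/4} dy ≥ C ∫ f² e^{-|y|²/4} dy`. -/
theorem stmt2 (C : ℝ) (hC : 0 < C) (m : ℕ) (hm : 1 ≤ m) :
    ∃ r : ℝ, 0 < r ∧
      ∀ f : EuclideanSpace ℝ (Fin m) → ℝ, ContDiff ℝ (⊤ : ℕ∞) f → HasCompactSupport f →
        tsupport f ⊆ (Metric.closedBall (0 : EuclideanSpace ℝ (Fin m)) r)ᶜ →
        ∫ y : EuclideanSpace ℝ (Fin m), ‖gradient f y‖ ^ 2 * Real.exp (-‖y‖ ^ 2 / 4) ≥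
          C * ∫ y : EuclideanSpace ℝ (Fin m), (f y) ^ 2 * Real.exp (-‖y‖ ^ 2 / 4) := by
  refine ⟨Real.sqrt (16*C + 4*m), Real.sqrt_pos.mpr (by positivity), ?_⟩
  intro f hf hsupp hsub
  set r : ℝ := Real.sqrt (16*C + 4*m) with hrdef
  have hrsq : r^2 = 16*C + 4*m := Real.sq_sqrt (by positivity)
  have hfc : Continuous f := hf.continuous
  have hf'c : Continuous (fderiv ℝ f) := hf.continuous_fderiv (by simp)
  have hρc : Continuous (rhoF m) := continuous_rhoF
  have hρpos : ∀ y : EuclideanSpace ℝ (Fin m), 0 < rhoF m y := fun y => Real.exp_pos _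
  -- integrability of all the integrands
  have hcs : ∀ (g : EuclideanSpace ℝ (Fin m) → ℝ), Continuous g →
      Integrable (fun y => (f y * g y : ℝ)) := by
    intro g hg
    exact ((hfc.mul hg).integrable_of_hasCompactSupport (hsupp.mul_right))
  have hint_f2 : Integrable (fun y : EuclideanSpace ℝ (Fin m) => (f y)^2 * rhoF m y) := by
    have : (fun y : EuclideanSpace ℝ (Fin m) => (f y)^2 * rhoF m y)
        = fun y => f y * (f y * rhoF m y) := by funext y; ring
    rw [this]; exact hcs _ (hfc.mul hρc)
  have hint_f2n : Integrable
      (fun y : EuclideanSpace ℝ (Fin m) => (f y)^2 * (‖y‖^2 * rhoF m y)) := by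
    have : (fun y : EuclideanSpace ℝ (Fin m) => (f y)^2 * (‖y‖^2 * rhoF m y))
        = fun y => f y * (f y * (‖y‖^2 * rhoF m y)) := by funext y; ring
    rw [this]; exact hcs _ (hfc.mul ((continuous_norm.pow 2).mul hρc))
  have hint_grad : Integrable
      (fun y : EuclideanSpace ℝ (Fin m) => ‖fderiv ℝ f y‖^2 * rhoF m y) := by
    apply Continuous.integrable_of_hasCompactSupport
    · exact (hf'c.norm.pow 2).mul hρc
    · apply HasCompactSupport.mul_right
      have hfd : HasCompactSupport (fderiv ℝ f) := hsupp.fderiv (𝕜 := ℝ)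
      exact hfd.comp_left (g := fun L : EuclideanSpace ℝ (Fin m) →L[ℝ] ℝ => ‖L‖^2) (by simp)
  have hint_mid : Integrable
      (fun y : EuclideanSpace ℝ (Fin m) => (f y)^2 * ((‖y‖^2/2 - m) * rhoF m y)) := by
    have : (fun y : EuclideanSpace ℝ (Fin m) => (f y)^2 * ((‖y‖^2/2 - m) * rhoF m y))
        = fun y => f y * (f y * ((‖y‖^2/2 - m) * rhoF m y)) := by funext y; ring
    rw [this]
    exact hcs _ (hfc.mul ((((continuous_norm.pow 2).div_const 2).sub continuous_const).mul hρc))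
  have hint_quarter : Integrable
      (fun y : EuclideanSpace ℝ (Fin m) => (f y)^2 * ((‖y‖^2/4 - m) * rhoF m y)) := by
    have : (fun y : EuclideanSpace ℝ (Fin m) => (f y)^2 * ((‖y‖^2/4 - m) * rhoF m y))
        = fun y => f y * (f y * ((‖y‖^2/4 - m) * rhoF m y)) := by funext y; ring
    rw [this]
    exact hcs _ (hfc.mul ((((continuous_norm.pow 2).div_const 4).sub continuous_const).mul hρc))
  -- step 1 : the integration by parts identity, rearranged
  have step1 : ∫ y : EuclideanSpace ℝ (Fin m), (f y)^2 * ((‖y‖^2/2 - (m:ℝ)) * rhoF m y)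
      = ∫ y : EuclideanSpace ℝ (Fin m), (2 * f y * fderiv ℝ f y y) * rhoF m y := by
    have h := ibp_sum f hf hsupp
    have h2 : ∫ y : EuclideanSpace ℝ (Fin m), (f y)^2 * ((‖y‖^2/2 - (m:ℝ)) * rhoF m y)
        = -∫ y : EuclideanSpace ℝ (Fin m), (f y)^2 * (((m:ℝ) - ‖y‖^2/2) * rhoF m y) := by
      rw [← integral_neg]
      apply integral_congr_ae; filter_upwards with y; ring
    rw [h2, h, neg_neg]
  -- step 2 : pointwise Cauchy-Schwarz / AM-GM bound
  have step2 : ∫ y : EuclideanSpace ℝ (Fin m), (2 * f y * fderiv ℝ f y y) * rhoF m y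
      ≤ ∫ y : EuclideanSpace ℝ (Fin m),
          ((1/4) * ((f y)^2 * (‖y‖^2 * rhoF m y)) + 4 * (‖fderiv ℝ f y‖^2 * rhoF m y)) := by
    apply integral_mono
    · have : (fun y : EuclideanSpace ℝ (Fin m) => (2 * f y * fderiv ℝ f y y) * rhoF m y)
          = fun y => f y * (2 * fderiv ℝ f y y * rhoF m y) := by funext y; ring
      rw [this]
      exact hcs _ ((continuous_const.mul (hf'c.clm_apply continuous_id)).mul hρc)
    · exact (hint_f2n.const_mul _).add (hint_grad.const_mul _)
    · intro y
      have habs : |fderiv ℝ f y y| ≤ ‖fderiv ℝ f y‖ * ‖y‖ := by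
        simpa [Real.norm_eq_abs] using (fderiv ℝ f y).le_opNorm y
      have hkey : 2 * f y * fderiv ℝ f y y
          ≤ (1/4) * ((f y)^2 * ‖y‖^2) + 4 * ‖fderiv ℝ f y‖^2 := by
        have h0 : 2 * f y * fderiv ℝ f y y ≤ 2 * |f y| * (‖fderiv ℝ f y‖ * ‖y‖) := by
          calc 2 * f y * fderiv ℝ f y y ≤ |2 * f y * fderiv ℝ f y y| := le_abs_self _
            _ = 2 * |f y| * |fderiv ℝ f y y| := by
                rw [abs_mul, abs_mul, abs_two]
            _ ≤ 2 * |f y| * (‖fderiv ℝ f y‖ * ‖y‖) := by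
                apply mul_le_mul_of_nonneg_left habs (by positivity)
        nlinarith [h0, sq_nonneg (|f y| * ‖y‖ / 2 - 2 * ‖fderiv ℝ f y‖), sq_abs (f y),
          abs_nonneg (f y), norm_nonneg y, norm_nonneg (fderiv ℝ f y)]
      have := mul_le_mul_of_nonneg_right hkey (hρpos y).le
      calc (2 * f y * fderiv ℝ f y y) * rhoF m y
          ≤ ((1/4) * ((f y)^2 * ‖y‖^2) + 4 * ‖fderiv ℝ f y‖^2) * rhoF m y := this
        _ = (1/4) * ((f y)^2 * (‖y‖^2 * rhoF m y)) + 4 * (‖fderiv ℝ f y‖^2 * rhoF m y) := by ring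
  -- step 3 : split the right-hand side
  have step3 : ∫ y : EuclideanSpace ℝ (Fin m),
        ((1/4) * ((f y)^2 * (‖y‖^2 * rhoF m y)) + 4 * (‖fderiv ℝ f y‖^2 * rhoF m y))
      = (1/4) * (∫ y : EuclideanSpace ℝ (Fin m), (f y)^2 * (‖y‖^2 * rhoF m y))
        + 4 * ∫ y : EuclideanSpace ℝ (Fin m), ‖fderiv ℝ f y‖^2 * rhoF m y := by
    rw [integral_add (hint_f2n.const_mul _) (hint_grad.const_mul _),
      integral_const_mul, integral_const_mul]
  -- step 4 : absorb the quarter term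
  have step4 : ∫ y : EuclideanSpace ℝ (Fin m), (f y)^2 * ((‖y‖^2/4 - m) * rhoF m y)
      ≤ 4 * ∫ y : EuclideanSpace ℝ (Fin m), ‖fderiv ℝ f y‖^2 * rhoF m y := by
    have hdiff : ∫ y : EuclideanSpace ℝ (Fin m), (f y)^2 * ((‖y‖^2/4 - m) * rhoF m y)
        = (∫ y : EuclideanSpace ℝ (Fin m), (f y)^2 * ((‖y‖^2/2 - m) * rhoF m y))
          - (1/4) * ∫ y : EuclideanSpace ℝ (Fin m), (f y)^2 * (‖y‖^2 * rhoF m y) := by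
      rw [← integral_const_mul, ← integral_sub hint_mid (hint_f2n.const_mul _)]
      apply integral_congr_ae; filter_upwards with y; ring
    rw [hdiff]
    have := step1.le.trans (step2.trans step3.le)
    linarith
  -- step 5 : lower bound on the support
  have step5 : 4 * C * (∫ y : EuclideanSpace ℝ (Fin m), (f y)^2 * rhoF m y)
      ≤ ∫ y : EuclideanSpace ℝ (Fin m), (f y)^2 * ((‖y‖^2/4 - m) * rhoF m y) := by
    rw [← integral_const_mul]
    apply integral_mono (hint_f2.const_mul _) hint_quarter
    intro y
    by_cases hy : f y = 0
    · simp [hy]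
    · have hymem : y ∈ tsupport f := subset_tsupport f hy
      have hynot : y ∉ Metric.closedBall (0 : EuclideanSpace ℝ (Fin m)) r := hsub hymem
      have hnorm : r < ‖y‖ := by
        simpa [Metric.mem_closedBall, dist_zero_right, not_le] using hynot
      have hrsq' : r^2 ≤ ‖y‖^2 := by
        have h0 : (0:ℝ) ≤ r := Real.sqrt_nonneg _
        nlinarith
      have h4C : 4 * C ≤ ‖y‖^2/4 - m := by
        rw [hrsq] at hrsq'
        linarith
      have := hρpos y
      nlinarith [sq_nonneg (f y), mul_le_mul_of_nonneg_right h4C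
        (mul_nonneg (sq_nonneg (f y)) (hρpos y).le)]
  -- conclusion
  have hgradnorm : ∀ y : EuclideanSpace ℝ (Fin m), ‖gradient f y‖ = ‖fderiv ℝ f y‖ := by
    intro y; rw [gradient]; exact LinearIsometryEquiv.norm_map _ _
  have hfinal : C * (∫ y : EuclideanSpace ℝ (Fin m), (f y)^2 * rhoF m y)
      ≤ ∫ y : EuclideanSpace ℝ (Fin m), ‖fderiv ℝ f y‖^2 * rhoF m y := by
    linarith [step5.trans step4]
  have hgoal : (∫ y : EuclideanSpace ℝ (Fin m), ‖gradient f y‖^2 * rhoF m y)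
      = ∫ y : EuclideanSpace ℝ (Fin m), ‖fderiv ℝ f y‖^2 * rhoF m y := by
    apply integral_congr_ae; filter_upwards with y; rw [hgradnorm]
  show (∫ y : EuclideanSpace ℝ (Fin m), ‖gradient f y‖^2 * rhoF m y)
      ≥ C * ∫ y : EuclideanSpace ℝ (Fin m), (f y)^2 * rhoF m y
  rw [hgoal]
  exact hfinal
end
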